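/- For a behavior b non-Berkeley for δ > 0, any two distinct transition points t1 < t2 of b satisfy t2 - t1 ≥ δ. -/
import Mathlib

def ConstOn {S : Type*} (b : ℝ → S) (I : Set ℝ) : Prop :=
  ∀ x ∈ I, ∀ y ∈ I, b x = b y

def NonBerkeley {S : Type*} (b : ℝ → S) (δ : ℝ) : Prop :=
  ∀ t : ℝ, 0 ≤ t → ∃ u : ℝ, 0 ≤ u ∧ t ∈ Set.Icc u (u + δ) ∧ ConstOn b (Set.Icc u (u + δ))

def IsTransition {S : Type*} (b : ℝ → S) (t : ℝ) : Prop :=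
  ∀ ε > (0 : ℝ), ∃ x ∈ Set.Ioo (t - ε) (t + ε), ∃ y ∈ Set.Ioo (t - ε) (t + ε),
    0 ≤ x ∧ 0 ≤ y ∧ b x ≠ b y

lemma not_transition_of_interior {S : Type*} (b : ℝ → S) {u v t : ℝ}
    (hu : u < t) (hv : t < v) (hc : ConstOn b (Set.Icc u v)) : ¬ IsTransition b t := by
  intro h
  obtain ⟨x, hx, y, hy, _, _, hne⟩ := h (min (t - u) (v - t)) (by simp [hu, hv])
  exact hne <| hc x ⟨by have := min_le_left (t - u) (v - t); linarith [hx.1],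
      by have := min_le_right (t - u) (v - t); linarith [hx.2]⟩
    y ⟨by have := min_le_left (t - u) (v - t); linarith [hy.1],
      by have := min_le_right (t - u) (v - t); linarith [hy.2]⟩

/-- Any two distinct transition points of a behavior that is non-Berkeley for `δ > 0`
are at temporal distance at least `δ`. -/
theorem transitions_distance_ge {S : Type*} [Finite S] (b : ℝ → S) (δ : ℝ) (hδ : 0 < δ)
    (hB : NonBerkeley b δ) (t1 t2 : ℝ) (h1 : 0 ≤ t1) (h2 : 0 ≤ t2)
    (ht1 : IsTransition b t1) (ht2 : IsTransition b t2) (hlt : t1 < t2) :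
    δ ≤ t2 - t1 := by
  by_contra h
  push_neg at h
  obtain ⟨u, hu0, ⟨hum, hmu⟩, hconst⟩ := hB ((t1 + t2) / 2) (by linarith)
  by_cases hc : u < t1
  · exact not_transition_of_interior b hc (by linarith) hconst ht1
  · push_neg at hc
    exact not_transition_of_interior b (by linarith) (by linarith) hconst ht2
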